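/- Let V be a finite-dimensional real vector space and B a symmetric bilinear form on V. Let W be a subspace of V and let S = {v ∈ V : B(v, w) = 0 for all w ∈ W} be the B-orthogonal subspace to W. Then n₋(B) = n₋(B restricted to W) + n₋(B restricted to S) + dim(W ∩ S) − dim(W ∩ ker B), where ker B = {v ∈ V : B(v, u) = 0 for all u ∈ V} is the radical of B. -/

import Mathlib

/-- The negative index `n₋(B)` of a bilinear form `B`: the supremum of the
dimensions of the subspaces on which `B` is negative definite. -/
noncomputable def negIndex {V : Type*} [AddCommGroup V] [Module ℝ V]
    (B : LinearMap.BilinForm ℝ V) : ℕ :=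
  sSup {n : ℕ | ∃ W : Submodule ℝ V, (∀ v ∈ W, v ≠ 0 → B v v < 0) ∧
    Module.finrank ℝ ↥W = n}

/-!
Write `n(T)` for the negative index of `B` on a subspace `T`. Comparing a maximal negative
definite subspace with a complementary nonnegative one shows that `n` is additive on
`B`-orthogonal direct sums; it vanishes on totally isotropic subspaces.

Let `Z = W ∩ S` be the radical of `B|_W` and `W = Z ⊕ W₁`. Then `B|_{W₁}` is nondegenerate, so
`V = W₁ ⊕ U` with `U = W₁^⊥` and `n(V) = n(W) + n(U)`. Inside `U` the subspace `Z` is totally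
isotropic and `U ∩ Z^⊥ = S`. An isotropic `z` outside the radical of `U` has an isotropic partner
`v` with `B(z, v) = 1`; the hyperbolic plane `⟨z, v⟩` has index one and splits off orthogonally,
so induction on `dim Z` gives `n(U) = n(S) + dim Z - dim (Z ∩ rad U)`, and
`Z ∩ rad U = W ∩ ker B`.
-/

open Module
open LinearMap (BilinForm)

theorem IsCompl.sup_inf_eq_of_le {α : Type*} [Lattice α] [BoundedOrder α] [IsModularLattice α]
    {a b c : α} (h : IsCompl a b) (hac : a ≤ c) : a ⊔ c ⊓ b = c := by
  rw [inf_comm, ← sup_inf_assoc_of_le b hac, h.sup_eq_top, top_inf_eq]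

theorem Submodule.finrank_sup_of_disjoint {K V : Type*} [DivisionRing K] [AddCommGroup V]
    [Module K V] {A C : Submodule K V} [FiniteDimensional K A] [FiniteDimensional K C]
    (h : Disjoint A C) : finrank K ↥(A ⊔ C) = finrank K A + finrank K C := by
  rw [← finrank_sup_add_finrank_inf_eq, h.eq_bot, finrank_bot, add_zero]

namespace LinearMap.BilinForm

open Submodule

section Orthogonal

variable {R M : Type*} [CommRing R] [AddCommGroup M] [Module R M] {B : BilinForm R M}

theorem orthogonal_sup (A C : Submodule R M) :
    B.orthogonal (A ⊔ C) = B.orthogonal A ⊓ B.orthogonal C := by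
  refine le_antisymm (le_inf (orthogonal_le le_sup_left) (orthogonal_le le_sup_right)) ?_
  rintro m ⟨hA, hC⟩ x hx
  obtain ⟨a, ha, c, hc, rfl⟩ := mem_sup.1 hx
  change B (a + c) m = 0
  rw [map_add, LinearMap.add_apply, hA a ha, hC c hc, add_zero]

theorem IsRefl.le_orthogonal_comm (hB : B.IsRefl) {A C : Submodule R M} :
    A ≤ B.orthogonal C ↔ C ≤ B.orthogonal A :=
  ⟨fun h c hc a ha => hB c a (h ha c hc), fun h a ha c hc => hB a c (h hc a ha)⟩

theorem isCompl_span_singleton_orthogonal_span_singleton {K V : Type*} [Field K] [AddCommGroup V]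
    [Module K V] {B : BilinForm K V} {u w : V} (h : B w u ≠ 0) :
    IsCompl (K ∙ u) (B.orthogonal (K ∙ w)) := by
  refine ⟨disjoint_def.2 fun x hxu hxw => ?_, codisjoint_iff.2 ?_⟩
  · obtain ⟨c, rfl⟩ := mem_span_singleton.1 hxu
    have hc : c * B w u = 0 := by simpa using hxw w (mem_span_singleton_self w)
    simp [(mul_eq_zero.1 hc).resolve_right h]
  · rw [orthogonal_span_singleton_eq_toLin_ker]
    exact LinearMap.span_singleton_sup_ker_eq_top _ h

theorem disjoint_orthogonal_hyperbolic {K V : Type*} [Field K] [AddCommGroup V] [Module K V]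
    {B : BilinForm K V} (hB : B.IsSymm) {z v : V} (hzz : B z z = 0)
    (hvv : B v v = 0) (hzv : B z v = 1) :
    Disjoint (K ∙ z ⊔ K ∙ v) (B.orthogonal (K ∙ z ⊔ K ∙ v)) := by
  refine disjoint_def.2 fun x hx hxH => ?_
  obtain ⟨_, hzx, _, hvx, rfl⟩ := mem_sup.1 hx
  obtain ⟨a, rfl⟩ := mem_span_singleton.1 hzx
  obtain ⟨b, rfl⟩ := mem_span_singleton.1 hvx
  have hz := hxH z (mem_sup_left (mem_span_singleton_self z))
  have hv := hxH v (mem_sup_right (mem_span_singleton_self v))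
  simp only [map_add, map_smul, smul_eq_mul, hzz, hvv, hzv, hB.eq v z] at hz hv
  simp [show a = 0 by simpa using hv, show b = 0 by simpa using hz]

end Orthogonal

variable {V : Type*} [AddCommGroup V] [Module ℝ V] {B : BilinForm ℝ V}

def IsNegDefOn (B : BilinForm ℝ V) (N : Submodule ℝ V) : Prop :=
  ∀ v ∈ N, v ≠ 0 → B v v < 0

noncomputable def negIndexOn (B : BilinForm ℝ V) (T : Submodule ℝ V) : ℕ :=
  sSup {n | ∃ N ≤ T, B.IsNegDefOn N ∧ finrank ℝ N = n}

theorem isNegDefOn_bot : B.IsNegDefOn ⊥ :=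
  fun _ hv h0 => absurd ((mem_bot ℝ).1 hv) h0

theorem apply_smul_smul_self (c : ℝ) (x : V) : B (c • x) (c • x) = c * c * B x x := by
  simp only [map_smul, LinearMap.smul_apply, smul_eq_mul]
  ring

theorem isNegDefOn_span_singleton {x : V} (hx : B x x < 0) : B.IsNegDefOn (ℝ ∙ x) := by
  intro y hy hy0
  obtain ⟨c, rfl⟩ := mem_span_singleton.1 hy
  rw [apply_smul_smul_self]
  exact mul_neg_of_pos_of_neg (mul_self_pos.2 (left_ne_zero_of_smul hy0)) hx

theorem apply_nonneg_of_mem_span_singleton {x y : V} (hx : 0 ≤ B x x) (hy : y ∈ ℝ ∙ x) :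
    0 ≤ B y y := by
  obtain ⟨c, rfl⟩ := mem_span_singleton.1 hy
  rw [apply_smul_smul_self]
  exact mul_nonneg (mul_self_nonneg c) hx

theorem IsNegDefOn.apply_nonpos {N : Submodule ℝ V} (hN : B.IsNegDefOn N) {v : V} (hv : v ∈ N) :
    B v v ≤ 0 := by
  rcases eq_or_ne v 0 with rfl | h0
  · simp
  · exact (hN v hv h0).le

theorem IsNegDefOn.disjoint {N P : Submodule ℝ V} (hN : B.IsNegDefOn N)
    (hP : ∀ v ∈ P, 0 ≤ B v v) : Disjoint N P :=
  disjoint_def.2 fun v hvN hvP => by_contra fun h0 => (hN v hvN h0).not_ge (hP v hvP)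

theorem apply_add_add_of_mem_orthogonal (hB : B.IsSymm) {A : Submodule ℝ V} {a c : V}
    (ha : a ∈ A) (hc : c ∈ B.orthogonal A) : B (a + c) (a + c) = B a a + B c c := by
  have hac : B a c = 0 := hc a ha
  simp only [map_add, LinearMap.add_apply, hB.eq c a, hac]
  ring

theorem IsNegDefOn.sup (hB : B.IsSymm) {N₁ N₂ : Submodule ℝ V} (h₁ : B.IsNegDefOn N₁)
    (h₂ : B.IsNegDefOn N₂) (h : N₂ ≤ B.orthogonal N₁) : B.IsNegDefOn (N₁ ⊔ N₂) := by
  intro x hx hx0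
  obtain ⟨a, ha, c, hc, rfl⟩ := mem_sup.1 hx
  rw [apply_add_add_of_mem_orthogonal hB ha (h hc)]
  rcases eq_or_ne c 0 with rfl | hc0
  · linarith [h₁ a ha (by simpa using hx0), h₂.apply_nonpos hc]
  · linarith [h₁.apply_nonpos ha, h₂ c hc hc0]

theorem exists_isotropic_partner (hB : B.IsSymm) {T : Submodule ℝ V} {z : V} (hzT : z ∈ T)
    (hzz : B z z = 0) (hz : z ∉ B.orthogonal T) : ∃ v ∈ T, B z v = 1 ∧ B v v = 0 := by
  obtain ⟨t, htT, ht⟩ : ∃ t ∈ T, B z t ≠ 0 := by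
    simpa [hB.eq _ z] using hz
  set s := (B z t)⁻¹ • t
  have hzs : B z s = 1 := by simp [s, ht]
  refine ⟨s - (B s s / 2) • z, sub_mem (T.smul_mem _ htT) (T.smul_mem _ hzT), ?_, ?_⟩
  · simp [hzs, hzz]
  · simp only [map_sub, map_smul, LinearMap.sub_apply, LinearMap.smul_apply, smul_eq_mul, hzz,
      hzs, hB.eq s z]
    ring

variable [FiniteDimensional ℝ V]

theorem bddAbove_finrank_isNegDefOn (B : BilinForm ℝ V) (T : Submodule ℝ V) :
    BddAbove {n | ∃ N ≤ T, B.IsNegDefOn N ∧ finrank ℝ N = n} :=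
  ⟨finrank ℝ V, fun _ ⟨N, _, _, hN⟩ => hN ▸ N.finrank_le⟩

theorem exists_isNegDefOn_finrank_eq_negIndexOn (B : BilinForm ℝ V) (T : Submodule ℝ V) :
    ∃ N ≤ T, B.IsNegDefOn N ∧ finrank ℝ N = B.negIndexOn T :=
  Nat.sSup_mem (s := {n | ∃ N ≤ T, B.IsNegDefOn N ∧ finrank ℝ N = n})
    ⟨0, ⊥, bot_le, isNegDefOn_bot, finrank_bot ℝ V⟩ (bddAbove_finrank_isNegDefOn B T)

theorem IsNegDefOn.finrank_le_negIndexOn {N T : Submodule ℝ V} (hN : B.IsNegDefOn N)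
    (hNT : N ≤ T) : finrank ℝ N ≤ B.negIndexOn T :=
  le_csSup (bddAbove_finrank_isNegDefOn B T) ⟨N, hNT, hN, rfl⟩

theorem negIndexOn_add_finrank_le {P T : Submodule ℝ V} (hPT : P ≤ T)
    (hP : ∀ v ∈ P, 0 ≤ B v v) : B.negIndexOn T + finrank ℝ P ≤ finrank ℝ T := by
  obtain ⟨N, hNT, hN, hrk⟩ := exists_isNegDefOn_finrank_eq_negIndexOn B T
  rw [← hrk, ← finrank_sup_of_disjoint (hN.disjoint hP)]
  exact finrank_mono (sup_le hNT hPT)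

theorem negIndexOn_eq_zero_of_le_orthogonal {A : Submodule ℝ V} (hA : A ≤ B.orthogonal A) :
    B.negIndexOn A = 0 := by
  obtain ⟨N, hNA, hN, hrk⟩ := exists_isNegDefOn_finrank_eq_negIndexOn B A
  have hN0 : N = ⊥ := eq_bot_iff.2 fun v hv =>
    (mem_bot ℝ).2 (by_contra fun h0 => (hN v hv h0).ne (hA (hNA hv) v (hNA hv)))
  rw [← hrk, hN0, finrank_bot]

theorem exists_isNegDefOn_nonneg_finrank_add_finrank (hB : B.IsSymm) (T : Submodule ℝ V) :
    ∃ N ≤ T, ∃ P ≤ T, B.IsNegDefOn N ∧ (∀ v ∈ P, 0 ≤ B v v) ∧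
      finrank ℝ N + finrank ℝ P = finrank ℝ T := by
  induction hT : finrank ℝ T using Nat.strong_induction_on generalizing T with
  | _ d ih =>
  by_cases hTnonneg : ∀ x ∈ T, 0 ≤ B x x
  · exact ⟨⊥, bot_le, T, le_rfl, isNegDefOn_bot, hTnonneg, by simp [hT]⟩
  push Not at hTnonneg
  obtain ⟨x, hxT, hx⟩ := hTnonneg
  set T' := T ⊓ B.orthogonal (ℝ ∙ x)
  have hcompl := isCompl_span_singleton_orthogonal_span_singleton hx.ne
  have hdim : finrank ℝ T = 1 + finrank ℝ T' := by
    rw [← hcompl.sup_inf_eq_of_le ((span_singleton_le_iff_mem _ _).2 hxT),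
      finrank_sup_of_disjoint (hcompl.disjoint.mono_right inf_le_right),
      finrank_span_singleton (ne_zero_of_not_isOrtho_self x hx.ne)]
  obtain ⟨N, hNT', P, hPT', hN, hP, hrk⟩ := ih (finrank ℝ T') (by omega) T' rfl
  have hxT' : ℝ ∙ x ≤ T := (span_singleton_le_iff_mem _ _).2 hxT
  refine ⟨ℝ ∙ x ⊔ N, sup_le hxT' (hNT'.trans inf_le_left),
    P, hPT'.trans inf_le_left,
    (isNegDefOn_span_singleton hx).sup hB hN (hNT'.trans inf_le_right), hP, ?_⟩
  rw [finrank_sup_of_disjoint (hcompl.disjoint.mono_right (hNT'.trans inf_le_right)),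
    finrank_span_singleton (ne_zero_of_not_isOrtho_self x hx.ne)]
  omega

theorem exists_nonneg_finrank_add_negIndexOn (hB : B.IsSymm) (T : Submodule ℝ V) :
    ∃ P ≤ T, (∀ v ∈ P, 0 ≤ B v v) ∧ finrank ℝ P + B.negIndexOn T = finrank ℝ T := by
  obtain ⟨N, hNT, P, hPT, hN, hP, hrk⟩ := exists_isNegDefOn_nonneg_finrank_add_finrank hB T
  have hle := negIndexOn_add_finrank_le hPT hP
  have hge := hN.finrank_le_negIndexOn hNT
  exact ⟨P, hPT, hP, by omega⟩

theorem negIndexOn_sup (hB : B.IsSymm) {A C : Submodule ℝ V} (hd : Disjoint A C)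
    (hCA : C ≤ B.orthogonal A) : B.negIndexOn (A ⊔ C) = B.negIndexOn A + B.negIndexOn C := by
  apply le_antisymm
  · obtain ⟨P, hPA, hP, hrkA⟩ := exists_nonneg_finrank_add_negIndexOn hB A
    obtain ⟨Q, hQC, hQ, hrkC⟩ := exists_nonneg_finrank_add_negIndexOn hB C
    have hPQ : ∀ v ∈ P ⊔ Q, 0 ≤ B v v := by
      intro v hv
      obtain ⟨p, hp, q, hq, rfl⟩ := mem_sup.1 hv
      rw [apply_add_add_of_mem_orthogonal hB (hPA hp) (hCA (hQC hq))]
      linarith [hP p hp, hQ q hq]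
    have := negIndexOn_add_finrank_le (sup_le_sup hPA hQC) hPQ
    rw [finrank_sup_of_disjoint hd, finrank_sup_of_disjoint (hd.mono hPA hQC)] at this
    omega
  · obtain ⟨N₁, hN₁A, hN₁, hrk₁⟩ := exists_isNegDefOn_finrank_eq_negIndexOn B A
    obtain ⟨N₂, hN₂C, hN₂, hrk₂⟩ := exists_isNegDefOn_finrank_eq_negIndexOn B C
    rw [← hrk₁, ← hrk₂, ← finrank_sup_of_disjoint (hd.mono hN₁A hN₂C)]
    have hN : B.IsNegDefOn (N₁ ⊔ N₂) :=
      hN₁.sup hB hN₂ (hN₂C.trans (hCA.trans (orthogonal_le hN₁A)))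
    exact hN.finrank_le_negIndexOn (sup_le_sup hN₁A hN₂C)

theorem negIndexOn_sup_eq_right (hB : B.IsSymm) {A C : Submodule ℝ V} (hd : Disjoint A C)
    (hA : A ≤ B.orthogonal A) (hCA : C ≤ B.orthogonal A) :
    B.negIndexOn (A ⊔ C) = B.negIndexOn C := by
  rw [negIndexOn_sup hB hd hCA, negIndexOn_eq_zero_of_le_orthogonal hA, zero_add]

theorem negIndexOn_eq_add_inf_orthogonal (hB : B.IsSymm) {H T : Submodule ℝ V} (hHT : H ≤ T)
    (hH : Disjoint H (B.orthogonal H)) :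
    B.negIndexOn T = B.negIndexOn H + B.negIndexOn (T ⊓ B.orthogonal H) := by
  have hcompl := (isCompl_orthogonal_iff_disjoint hB.isRefl).2 hH
  conv_lhs => rw [← hcompl.sup_inf_eq_of_le hHT]
  exact negIndexOn_sup hB (hH.mono_right inf_le_right) inf_le_right

theorem negIndexOn_hyperbolic (hB : B.IsSymm) {z v : V} (hzz : B z z = 0) (hvv : B v v = 0)
    (hzv : B z v = 1) : B.negIndexOn (ℝ ∙ z ⊔ ℝ ∙ v) = 1 := by
  have hneg : B (z - v) (z - v) < 0 := by
    simp only [map_sub, LinearMap.sub_apply, hzz, hvv, hzv, hB.eq v z]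
    norm_num
  have hpos : 0 ≤ B (z + v) (z + v) := by
    simp only [map_add, LinearMap.add_apply, hzz, hvv, hzv, hB.eq v z]
    norm_num
  have hzv0 : z + v ≠ 0 := fun h => by simpa [hzz, hzv] using congrArg (B z) h
  have hzH : z ∈ ℝ ∙ z ⊔ ℝ ∙ v := mem_sup_left (mem_span_singleton_self z)
  have hvH : v ∈ ℝ ∙ z ⊔ ℝ ∙ v := mem_sup_right (mem_span_singleton_self v)
  have hlow := (isNegDefOn_span_singleton hneg).finrank_le_negIndexOn
    ((span_singleton_le_iff_mem _ _).2 (sub_mem hzH hvH))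
  have hup := negIndexOn_add_finrank_le ((span_singleton_le_iff_mem _ _).2 (add_mem hzH hvH))
    fun _ => apply_nonneg_of_mem_span_singleton hpos
  have hz0 : z ≠ 0 := by rintro rfl; simp at hzv
  have hv0 : v ≠ 0 := by rintro rfl; simp at hzv
  have hdim := finrank_add_le_finrank_add_finrank (ℝ ∙ z) (ℝ ∙ v)
  rw [finrank_span_singleton hz0, finrank_span_singleton hv0] at hdim
  rw [finrank_span_singleton (ne_zero_of_not_isOrtho_self _ hneg.ne)] at hlow
  rw [finrank_span_singleton hzv0] at hup
  omega

theorem negIndexOn_eq_inf_orthogonal_add_one (hB : B.IsSymm) {T : Submodule ℝ V} {z : V}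
    (hzT : z ∈ T) (hzz : B z z = 0) (hz : z ∉ B.orthogonal T) :
    B.negIndexOn T = B.negIndexOn (T ⊓ B.orthogonal (ℝ ∙ z)) + 1 := by
  obtain ⟨v, hvT, hzv, hvv⟩ := exists_isotropic_partner hB hzT hzz hz
  have hvz : B v z ≠ 0 := by rw [hB.eq, hzv]; exact one_ne_zero
  have hcompl := isCompl_span_singleton_orthogonal_span_singleton hvz
  have hzz' : ℝ ∙ z ≤ B.orthogonal (ℝ ∙ z) := by
    rw [orthogonal_span_singleton_eq_toLin_ker, span_singleton_le_iff_mem]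
    exact hzz
  have hsplit := hcompl.sup_inf_eq_of_le (c := T ⊓ B.orthogonal (ℝ ∙ z)) (le_inf
    ((span_singleton_le_iff_mem _ _).2 hzT) hzz')
  have hHT : ℝ ∙ z ⊔ ℝ ∙ v ≤ T := sup_le ((span_singleton_le_iff_mem _ _).2 hzT)
    ((span_singleton_le_iff_mem _ _).2 hvT)
  rw [negIndexOn_eq_add_inf_orthogonal hB hHT (disjoint_orthogonal_hyperbolic hB hzz hvv hzv),
    negIndexOn_hyperbolic hB hzz hvv hzv, ← hsplit, negIndexOn_sup_eq_right hB
      (hcompl.disjoint.mono_right inf_le_right) hzz' (inf_le_left.trans inf_le_right),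
    orthogonal_sup, inf_assoc, add_comm]

theorem negIndexOn_eq_inf_orthogonal_add_finrank (hB : B.IsSymm) {T Z : Submodule ℝ V}
    (hZT : Z ≤ T) (hZ : Z ≤ B.orthogonal Z) (hZT' : Disjoint Z (B.orthogonal T)) :
    B.negIndexOn T = B.negIndexOn (T ⊓ B.orthogonal Z) + finrank ℝ Z := by
  induction hn : finrank ℝ Z generalizing T Z with
  | zero => rw [finrank_eq_zero.1 hn, orthogonal_bot, inf_top_eq, add_zero]
  | succ n ih =>
  obtain ⟨z, hzZ, hz0⟩ := exists_mem_ne_zero_of_ne_bot (p := Z) (by rintro rfl; simp at hn)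
  have hzT : z ∉ B.orthogonal T := fun h => hz0 (disjoint_def.1 hZT' z hzZ h)
  obtain ⟨t, htT, htz⟩ : ∃ t ∈ T, B t z ≠ 0 := by simpa using hzT
  -- `Z₁` complements `ℝ ∙ z` in `Z` and is orthogonal to `t`, which keeps it off the
  -- radical of `T₁`.
  set Z₁ := Z ⊓ B.orthogonal (ℝ ∙ t)
  set T₁ := T ⊓ B.orthogonal (ℝ ∙ z)
  have hZcompl := isCompl_span_singleton_orthogonal_span_singleton htz
  have hZsplit : ℝ ∙ z ⊔ Z₁ = Z :=
    hZcompl.sup_inf_eq_of_le ((span_singleton_le_iff_mem _ _).2 hzZ)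
  have hTsplit : ℝ ∙ t ⊔ T₁ = T :=
    (isCompl_span_singleton_orthogonal_span_singleton (by rwa [hB.eq])).sup_inf_eq_of_le
      ((span_singleton_le_iff_mem _ _).2 htT)
  have hZ₁ : finrank ℝ Z₁ = n := by
    have := finrank_sup_of_disjoint (A := ℝ ∙ z) (C := Z₁)
      (hZcompl.disjoint.mono_right inf_le_right)
    rw [hZsplit, finrank_span_singleton hz0, hn] at this
    omega
  have hZ₁T₁ : Z₁ ≤ T₁ := le_inf (inf_le_left.trans hZT)
    (inf_le_left.trans (hZ.trans (orthogonal_le ((span_singleton_le_iff_mem _ _).2 hzZ))))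
  have hZ₁rad : Disjoint Z₁ (B.orthogonal T₁) := disjoint_def.2 fun y hy hyT₁ =>
    disjoint_def.1 hZT' y hy.1 (by rw [← hTsplit, orthogonal_sup]; exact ⟨hy.2, hyT₁⟩)
  have hZ₁iso : Z₁ ≤ B.orthogonal Z₁ :=
    inf_le_left.trans (hZ.trans (orthogonal_le inf_le_left))
  rw [negIndexOn_eq_inf_orthogonal_add_one hB (hZT hzZ) (hZ hzZ z hzZ) hzT,
    ih hZ₁T₁ hZ₁iso hZ₁rad hZ₁, inf_assoc, ← orthogonal_sup, hZsplit]
  ring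

theorem negIndexOn_add_finrank_inf_orthogonal_eq (hB : B.IsSymm) {T Z : Submodule ℝ V}
    (hZT : Z ≤ T) (hZ : Z ≤ B.orthogonal Z) :
    B.negIndexOn T + finrank ℝ ↥(Z ⊓ B.orthogonal T) =
      B.negIndexOn (T ⊓ B.orthogonal Z) + finrank ℝ Z := by
  obtain ⟨Y, hY⟩ := Submodule.exists_isCompl (Z ⊓ B.orthogonal T)
  set Z₂ := Z ⊓ Y
  have hZsplit : Z ⊓ B.orthogonal T ⊔ Z₂ = Z := hY.sup_inf_eq_of_le inf_le_left
  have hZ₂rad : Disjoint Z₂ (B.orthogonal T) := disjoint_def.2 fun y hy hyT =>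
    disjoint_def.1 hY.disjoint y ⟨hy.1, hyT⟩ hy.2
  have hTZ : T ⊓ B.orthogonal Z₂ = T ⊓ B.orthogonal Z := by
    rw [← hZsplit, orthogonal_sup, ← inf_assoc, inf_eq_left.2
      (hB.isRefl.le_orthogonal_comm.1 inf_le_right)]
  have hdim := finrank_sup_of_disjoint (A := Z ⊓ B.orthogonal T) (C := Z₂)
    (hY.disjoint.mono_right inf_le_right)
  rw [hZsplit] at hdim
  rw [negIndexOn_eq_inf_orthogonal_add_finrank hB (inf_le_left.trans hZT)
    ((inf_le_left.trans hZ).trans (orthogonal_le inf_le_left)) hZ₂rad, hTZ, hdim]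
  ring

theorem exists_nondegenerate_compl_radical (hB : B.IsSymm) (W : Submodule ℝ V) :
    ∃ W₁ ≤ W, W ⊓ B.orthogonal W ⊔ W₁ = W ∧ Disjoint W₁ (B.orthogonal W₁) ∧
      B.negIndexOn W₁ = B.negIndexOn W := by
  obtain ⟨Y, hY⟩ := Submodule.exists_isCompl (W ⊓ B.orthogonal W)
  have hWZ : W ≤ B.orthogonal (W ⊓ B.orthogonal W) :=
    hB.isRefl.le_orthogonal_comm.1 inf_le_right
  have hsplit : W ⊓ B.orthogonal W ⊔ W ⊓ Y = W := hY.sup_inf_eq_of_le inf_le_left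
  refine ⟨W ⊓ Y, inf_le_left, hsplit, disjoint_def.2 fun x hx hxo => ?_, ?_⟩
  · refine disjoint_def.1 hY.disjoint x ⟨hx.1, ?_⟩ hx.2
    rw [← hsplit, orthogonal_sup]
    exact ⟨hWZ hx.1, hxo⟩
  · conv_rhs => rw [← hsplit]
    exact (negIndexOn_sup_eq_right hB (hY.disjoint.mono_right inf_le_right)
      (inf_le_left.trans hWZ) (inf_le_left.trans hWZ)).symm

end LinearMap.BilinForm

open LinearMap.BilinForm

theorem negIndex_eq_negIndexOn_top {V : Type*} [AddCommGroup V] [Module ℝ V]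
    (B : BilinForm ℝ V) : negIndex B = B.negIndexOn ⊤ := by
  simp only [negIndex, negIndexOn, IsNegDefOn, le_top, true_and]

theorem negIndex_restrict {V : Type*} [AddCommGroup V] [Module ℝ V] (B : BilinForm ℝ V)
    (T : Submodule ℝ V) : negIndex (B.restrict T) = B.negIndexOn T := by
  unfold negIndex negIndexOn
  congr 1
  ext n
  constructor
  · rintro ⟨N, hN, rfl⟩
    refine ⟨N.map T.subtype, Submodule.map_subtype_le T N, ?_,
      Submodule.finrank_map_subtype_eq T N⟩
    rintro _ ⟨x, hx, rfl⟩ h0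
    simpa using hN x hx (fun h => h0 (by simp [h]))
  · rintro ⟨N, hNT, hN, rfl⟩
    refine ⟨N.comap T.subtype, fun v hv hv0 => by simpa using hN v hv (by simpa using hv0), ?_⟩
    rw [← Submodule.finrank_map_subtype_eq, Submodule.map_comap_subtype, inf_eq_right.2 hNT]

/-- For a symmetric bilinear form `B` on a finite-dimensional real
vector space `V`, a subspace `W` and its `B`-orthogonal subspace `S`,
`n₋(B) = n₋(B|_W) + n₋(B|_S) + dim (W ∩ S) − dim (W ∩ ker B)`. -/
theorem index_formula_finite_dim {V : Type*} [AddCommGroup V] [Module ℝ V]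
    [FiniteDimensional ℝ V]
    (B : LinearMap.BilinForm ℝ V) (hBsymm : ∀ x y, B x y = B y x)
    (W S : Submodule ℝ V)
    (hS : ∀ v, v ∈ S ↔ ∀ w ∈ W, B v w = 0) :
    (negIndex B : ℤ) =
      (negIndex (LinearMap.BilinForm.restrict B W) : ℤ)
        + (negIndex (LinearMap.BilinForm.restrict B S) : ℤ)
        + (Module.finrank ℝ ↥(W ⊓ S) : ℤ)
        - (Module.finrank ℝ ↥(W ⊓ LinearMap.ker B) : ℤ) := by
  have hB : B.IsSymm := ⟨hBsymm⟩
  obtain rfl : S = B.orthogonal W := by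
    ext v
    simp only [hS, mem_orthogonal_iff, hBsymm v]
  rw [← orthogonal_top_eq_ker hB.isRefl, negIndex_eq_negIndexOn_top, negIndex_restrict,
    negIndex_restrict]
  obtain ⟨W₁, hW₁W, hsplit, hW₁, hnW₁⟩ := exists_nondegenerate_compl_radical hB W
  set Z := W ⊓ B.orthogonal W
  have hZ : Z ≤ B.orthogonal Z := inf_le_left.trans (hB.isRefl.le_orthogonal_comm.1 inf_le_right)
  have hZW₁ : Z ≤ B.orthogonal W₁ := inf_le_right.trans (orthogonal_le hW₁W)
  have hcompl := (isCompl_orthogonal_iff_disjoint hB.isRefl).2 hW₁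
  have hV := negIndexOn_eq_add_inf_orthogonal hB le_top hW₁
  have hU := negIndexOn_add_finrank_inf_orthogonal_eq hB hZW₁ hZ
  have hS : B.orthogonal W₁ ⊓ B.orthogonal Z = B.orthogonal W := by
    rw [← orthogonal_sup, sup_comm, hsplit]
  have hK : Z ⊓ B.orthogonal (B.orthogonal W₁) = W ⊓ B.orthogonal ⊤ := by
    rw [← inf_eq_left.2 hZW₁, inf_assoc, ← orthogonal_sup, hcompl.sup_eq_top, inf_assoc,
      inf_eq_right.2 (orthogonal_le le_top)]
  rw [top_inf_eq] at hV
  rw [hS, hK] at hU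
  omega
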